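/- Linear Programming Bound for orthogonal arrays: if a real polynomial f(z) = Σ_{i=0}^n f_i K_i^{(n,q)}(z) satisfies f_0 > 0, f_i ≤ 0 for i = τ+1, ..., n, f(0) > 0, and f(i) ≥ 0 for i = 1,...,n, then every code C ⊆ F_q^n whose dual distance distribution satisfies B'_i = 0 for 1 ≤ i ≤ τ (i.e. C is a τ-design) has |C| ≥ f(0)/f_0. -/

import Mathlib

open Finset

/-- Generalized binomial coefficient `C(z, j) = z(z-1)⋯(z-j+1)/j!` for real `z`. -/
noncomputable def realChoose (z : ℝ) (j : ℕ) : ℝ :=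
  (∏ k ∈ Finset.range j, (z - k)) / (Nat.factorial j)

/-- The Krawtchouk polynomial `K_i^{(n,q)}(z)`. -/
noncomputable def kraw (n q i : ℕ) (z : ℝ) : ℝ :=
  ∑ j ∈ Finset.range (i + 1),
    (-1 : ℝ) ^ j * ((q : ℝ) - 1) ^ (i - j) * (q : ℝ) ^ j *
      ((n - j).choose (n - i) : ℝ) * realChoose z j

/-- The distance distribution `B_i` of a code `C ⊆ F_q^n`. -/
noncomputable def distDistrib {n q : ℕ} (C : Finset (Fin n → Fin q)) (i : ℕ) : ℝ :=
  (((C ×ˢ C).filter (fun p => hammingDist p.1 p.2 = i)).card : ℝ) / (C.card : ℝ)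

/-- The dual distance distribution (MacWilliams transform) `B'_i` of a code. -/
noncomputable def dualDistDistrib {n q : ℕ} (C : Finset (Fin n → Fin q)) (i : ℕ) : ℝ :=
  (∑ j ∈ Finset.range (n + 1), distDistrib C j * kraw n q i j) / (C.card : ℝ)

/-!
Let `ψ` be a primitive additive character of a finite commutative ring `R` with `q` elements.
Comparing coefficients in `∑_v ψ(v·u) X^{wt v} = (1 - X)^{wt u} (1 + (q - 1)X)^{n - wt u}` shows
`K_k(wt u) = ∑_{wt v = k} ψ(v·u)`; with `u = x - y` this gives Delsarte's inequality
`∑_{x,y ∈ C} K_k(d(x,y)) = ∑_{wt v = k} |∑_{x ∈ C} ψ(v·x)|² ≥ 0`, i.e. `B'_k ≥ 0`, for every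
alphabet of size `q` once it is identified with `ℤ/q`. Then
`|C| f(0) ≤ ∑_{x,y ∈ C} f(d(x,y)) = ∑_k f_k ∑_{x,y ∈ C} K_k(d(x,y)) ≤ f_0 |C|²`:
the off-diagonal terms `f(i)`, `i ≥ 1`, are nonnegative, the terms `1 ≤ k ≤ τ` vanish because `C` is
a design, and those with `k > τ` are `≤ 0` since `f_k ≤ 0`.
-/

lemma realChoose_natCast (w j : ℕ) : realChoose w j = w.choose j := by
  rw [realChoose, Nat.cast_choose_eq_descPochhammer_div, descPochhammer_eval_eq_prod_range]

lemma kraw_zero (n q : ℕ) (z : ℝ) : kraw n q 0 z = 1 := by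
  simp [kraw, realChoose]

section Krawtchouk
open Polynomial

lemma coeff_one_add_C_mul_X_pow {R : Type*} [CommRing R] (c : R) (m k : ℕ) :
    ((1 + C c * X) ^ m).coeff k = m.choose k * c ^ k := by
  have hterm : ∀ j, (C c * X) ^ j * 1 ^ (m - j) * (m.choose j : R[X]) =
      C (m.choose j * c ^ j) * X ^ j := fun j => by
    rw [one_pow, mul_one, mul_pow, ← C_pow, ← C_eq_natCast, mul_right_comm, ← C_mul,
      mul_comm (c ^ j)]
  rw [add_comm, add_pow, finsetSum_coeff]
  simp only [hterm, coeff_C_mul_X_pow, sum_ite_eq, mem_range]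
  split_ifs with h
  · rfl
  · rw [Nat.choose_eq_zero_of_lt (by omega), Nat.cast_zero, zero_mul]

lemma kraw_natCast_eq_coeff {n k w : ℕ} (q : ℕ) (hw : w ≤ n) (hk : k ≤ n) :
    kraw n q k w = ((1 - X) ^ w * (1 + C ((q : ℝ) - 1) * X) ^ (n - w)).coeff k := by
  have hexp : (1 - X) ^ w * (1 + C ((q : ℝ) - 1) * X) ^ (n - w) = ∑ j ∈ range (w + 1),
      C (w.choose j * (-q : ℝ) ^ j) * (X ^ j * (1 + C ((q : ℝ) - 1) * X) ^ (n - j)) := by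
    rw [show (1 : ℝ[X]) - X = C (-q : ℝ) * X + (1 + C ((q : ℝ) - 1) * X) by
        simp only [map_sub, map_neg, map_natCast, map_one]; ring, add_pow, sum_mul]
    refine sum_congr rfl fun j hj => ?_
    rw [show n - j = (w - j) + (n - w) by have := mem_range.1 hj; omega, pow_add, mul_pow, ← C_pow,
      C_mul, map_natCast]
    ring
  rw [hexp, finsetSum_coeff]
  simp only [coeff_C_mul, coeff_X_pow_mul', coeff_one_add_C_mul_X_pow, mul_ite, mul_zero,
    ← sum_filter]
  rw [kraw, ← sum_filter_of_ne (p := (· ≤ w)) fun j _ hj => ?_]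
  · rw [show (range (k + 1)).filter (· ≤ w) = (range (w + 1)).filter (· ≤ k) by ext; simp; omega]
    refine sum_congr rfl fun j hj => ?_
    obtain ⟨hjw, hjk⟩ : j < w + 1 ∧ j ≤ k := by simpa using hj
    rw [realChoose_natCast, ← Nat.choose_symm_of_eq_add (show n - j = (n - k) + (k - j) by omega)]
    ring_nf
  · by_contra hjw
    exact hj (by rw [realChoose_natCast, Nat.choose_eq_zero_of_lt (n := w) (by omega)]; simp)
end Krawtchouk

section Characters
open Polynomial ComplexConjugate

variable {R : Type*} [CommRing R] [Fintype R] {ψ : AddChar R ℂ}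

lemma prod_addChar_mul_sub {n : ℕ} (v x y : Fin n → R) :
    ∏ i, ψ (v i * (x i - y i)) = (∏ i, ψ (v i * x i)) * conj (∏ i, ψ (v i * y i)) := by
  rw [map_prod, ← prod_mul_distrib]
  congr! 1 with i
  rw [← AddChar.map_neg_eq_conj, ← AddChar.map_add_eq_mul, mul_sub, sub_eq_add_neg]

variable [DecidableEq R]

lemma sum_C_addChar_mul_X_pow_ite (hψ : ψ.IsPrimitive) (b : R) :
    ∑ a : R, C (ψ (a * b)) * X ^ (if a ≠ 0 then 1 else 0) =
      if b = 0 then 1 + C ((Fintype.card R : ℂ) - 1) * X else 1 - X := by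
  have hsum : ∑ a ∈ univ.erase 0, ψ (a * b) =
      ((if b = 0 then Fintype.card R else 0 : ℕ) : ℂ) - 1 := by
    rw [← AddChar.sum_mulShift b hψ, ← add_sum_erase _ _ (mem_univ 0), zero_mul,
      AddChar.map_zero_eq_one, add_sub_cancel_left]
  rw [← add_sum_erase _ _ (mem_univ 0),
    sum_congr rfl fun a ha => by rw [if_pos (ne_of_mem_erase ha), pow_one], ← sum_mul, ← map_sum,
    hsum]
  simp only [ne_eq, not_true_eq_false, if_false, pow_zero, mul_one, zero_mul,
    AddChar.map_zero_eq_one, map_one]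
  split_ifs
  · ring
  · rw [Nat.cast_zero, zero_sub, map_neg, map_one]; ring

lemma sum_C_prod_addChar_mul_X_pow_hammingNorm {n : ℕ} (hψ : ψ.IsPrimitive) (u : Fin n → R) :
    ∑ v : Fin n → R, C (∏ i, ψ (v i * u i)) * X ^ hammingNorm v =
      (1 - X) ^ hammingNorm u * (1 + C ((Fintype.card R : ℂ) - 1) * X) ^ (n - hammingNorm u) := by
  have hfactor : ∀ v : Fin n → R, C (∏ i, ψ (v i * u i)) * X ^ hammingNorm v =
      ∏ i, C (ψ (v i * u i)) * X ^ (if v i ≠ 0 then 1 else 0) := fun v => by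
    rw [prod_mul_distrib, map_prod, prod_pow_eq_pow_sum, hammingNorm, card_filter]
  simp_rw [hfactor]
  rw [← Fintype.prod_sum fun i (a : R) => C (ψ (a * u i)) * X ^ (if a ≠ 0 then 1 else 0)]
  simp_rw [sum_C_addChar_mul_X_pow_ite hψ]
  have hzeros := card_filter_add_card_filter_not (s := univ) fun i => u i = 0
  rw [card_univ, Fintype.card_fin] at hzeros
  rw [prod_ite, prod_const, prod_const, mul_comm, hammingNorm]
  simp only [ne_eq, ← hzeros, Nat.add_sub_cancel]

lemma kraw_hammingNorm_eq_sum_prod_addChar {n k : ℕ} (hψ : ψ.IsPrimitive) (u : Fin n → R)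
    (hk : k ≤ n) :
    (kraw n (Fintype.card R) k (hammingNorm u) : ℂ) =
      ∑ v with hammingNorm v = k, ∏ i, ψ (v i * u i) := by
  have h := congrArg (coeff · k) (sum_C_prod_addChar_mul_X_pow_hammingNorm hψ u)
  simp only [finsetSum_coeff, coeff_C_mul_X_pow, eq_comm (a := k), ← sum_filter] at h
  have hw : hammingNorm u ≤ n := by simpa using hammingNorm_le_card_fintype (x := u)
  rw [h, kraw_natCast_eq_coeff _ hw hk, ← Complex.ofRealHom_eq_coe, ← coeff_map]
  simp only [Polynomial.map_mul, Polynomial.map_pow, Polynomial.map_sub, Polynomial.map_add,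
    Polynomial.map_one, Polynomial.map_X, Polynomial.map_C, Complex.ofRealHom_eq_coe,
    Complex.ofReal_sub, Complex.ofReal_natCast, Complex.ofReal_one]

theorem sum_sum_kraw_hammingDist_nonneg {n k : ℕ} (hψ : ψ.IsPrimitive) {ι : Type*} (s : Finset ι)
    (x : ι → Fin n → R) (hk : k ≤ n) :
    0 ≤ ∑ i ∈ s, ∑ j ∈ s, kraw n (Fintype.card R) k (hammingDist (x i) (x j)) := by
  have hsq : ((∑ i ∈ s, ∑ j ∈ s, kraw n (Fintype.card R) k (hammingDist (x i) (x j)) : ℝ) : ℂ) =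
      ((∑ v : Fin n → R with hammingNorm v = k, ‖∑ i ∈ s, ∏ l, ψ (v l * x i l)‖ ^ 2 : ℝ) : ℂ) := by
    push_cast
    simp_rw [hammingDist_eq_hammingNorm, neg_add_eq_sub,
      kraw_hammingNorm_eq_sum_prod_addChar hψ _ hk, Pi.sub_apply, prod_addChar_mul_sub,
      ← Complex.mul_conj', map_sum, sum_mul_sum]
    rw [sum_comm]
    exact (sum_congr rfl fun j _ => sum_comm).trans sum_comm
  rw [Complex.ofReal_inj.1 hsq]
  positivity

end Characters

theorem sum_kraw_hammingDist_nonneg {α : Type*} [Fintype α] [DecidableEq α] [Nonempty α]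
    {n k : ℕ} (C : Finset (Fin n → α)) (hk : k ≤ n) :
    0 ≤ ∑ p ∈ C ×ˢ C, kraw n (Fintype.card α) k (hammingDist p.1 p.2) := by
  have : NeZero (Fintype.card α) := ⟨Fintype.card_ne_zero⟩
  let e : α ≃ ZMod (Fintype.card α) := Fintype.equivOfCardEq (ZMod.card _).symm
  have h :=
    sum_sum_kraw_hammingDist_nonneg (ZMod.isPrimitive_stdAddChar _) C (fun x l => e (x l)) hk
  rw [ZMod.card] at h
  simpa only [sum_product, hammingDist_comp (fun _ => e) fun _ => e.injective] using h

lemma card_mul_le_sum_hammingDist {α : Type*} [DecidableEq α] {n : ℕ} (C : Finset (Fin n → α))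
    {g : ℕ → ℝ} (hg : ∀ i, 1 ≤ i → i ≤ n → 0 ≤ g i) :
    #C * g 0 ≤ ∑ p ∈ C ×ˢ C, g (hammingDist p.1 p.2) := by
  rw [← diag_union_offDiag, sum_union (disjoint_diag_offDiag _), sum_diag]
  simp only [hammingDist_self, sum_const, nsmul_eq_mul]
  refine le_add_of_nonneg_right (sum_nonneg fun p hp => hg _ ?_ ?_)
  · exact hammingDist_pos.2 (mem_offDiag.1 hp).2.2
  · simpa using hammingDist_le_card_fintype (x := p.1) (y := p.2)

section DistanceDistribution
variable {n q : ℕ}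

lemma sum_distDistrib_mul (C : Finset (Fin n → Fin q)) (g : ℕ → ℝ) :
    ∑ j ∈ range (n + 1), distDistrib C j * g j =
      (∑ p ∈ C ×ˢ C, g (hammingDist p.1 p.2)) / #C := by
  have hmaps : ∀ p ∈ C ×ˢ C, hammingDist p.1 p.2 ∈ range (n + 1) := fun p _ =>
    mem_range.2 <| Nat.lt_succ_of_le <| by
      simpa using hammingDist_le_card_fintype (x := p.1) (y := p.2)
  rw [← sum_fiberwise_of_maps_to hmaps, sum_div]
  refine sum_congr rfl fun j _ => ?_
  rw [sum_congr rfl fun p hp => congrArg g (mem_filter.1 hp).2, sum_const, nsmul_eq_mul,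
    distDistrib]
  ring

lemma dualDistDistrib_eq_sum_kraw (C : Finset (Fin n → Fin q)) (k : ℕ) :
    dualDistDistrib C k = (∑ p ∈ C ×ˢ C, kraw n q k (hammingDist p.1 p.2)) / #C ^ 2 := by
  rw [dualDistDistrib, sum_distDistrib_mul, div_div, sq]

end DistanceDistribution

theorem LP_bound_for_designs_general (n q τ : ℕ) (hq : 2 ≤ q)
    (f : ℝ → ℝ) (c : ℕ → ℝ)
    (hf : ∀ z : ℝ, f z = ∑ i ∈ Finset.range (n + 1), c i * kraw n q i z)
    (hB1a : 0 < c 0) (hB1b : ∀ i : ℕ, τ + 1 ≤ i → i ≤ n → c i ≤ 0)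
    (hB2b : ∀ i : ℕ, 1 ≤ i → i ≤ n → 0 ≤ f i)
    (C : Finset (Fin n → Fin q)) (hC : C.Nonempty)
    (hdesign : ∀ i : ℕ, 1 ≤ i → i ≤ τ → dualDistDistrib C i = 0) :
    f 0 / c 0 ≤ (C.card : ℝ) := by
  have : NeZero q := ⟨by omega⟩
  have hCpos : (0 : ℝ) < #C := by exact_mod_cast hC.card_pos
  let S : ℕ → ℝ := fun k => ∑ p ∈ C ×ˢ C, kraw n q k (hammingDist p.1 p.2)
  have hS : ∀ k ∈ range n, c (k + 1) * S (k + 1) ≤ 0 := fun k hk => by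
    rcases le_or_gt (k + 1) τ with hkτ | hkτ
    · have h0 := hdesign (k + 1) k.succ_pos hkτ
      rw [dualDistDistrib_eq_sum_kraw, div_eq_zero_iff] at h0
      rw [show S (k + 1) = 0 from h0.resolve_right (by positivity), mul_zero]
    · have hkn : k + 1 ≤ n := mem_range.1 hk
      exact mul_nonpos_of_nonpos_of_nonneg (hB1b _ hkτ hkn)
        (by simpa using sum_kraw_hammingDist_nonneg C hkn)
  have hbound : #C * f 0 ≤ c 0 * #C ^ 2 := calc
    #C * f 0 ≤ ∑ p ∈ C ×ˢ C, f (hammingDist p.1 p.2) := by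
      simpa only [Nat.cast_zero] using card_mul_le_sum_hammingDist C hB2b
    _ = ∑ k ∈ range (n + 1), c k * S k := by simp_rw [S, hf, mul_sum]; exact sum_comm
    _ ≤ c 0 * S 0 := by rw [sum_range_succ']; linarith [sum_nonpos hS]
    _ = c 0 * #C ^ 2 := by simp [S, kraw_zero, sq]
  rw [div_le_iff₀ hB1a]
  nlinarith

theorem LP_bound_for_designs (n q τ : ℕ) (hn : 1 ≤ n) (hq : 2 ≤ q) (hτ : τ ≤ n)
    (f : ℝ → ℝ) (c : ℕ → ℝ)
    (hf : ∀ z : ℝ, f z = ∑ i ∈ Finset.range (n + 1), c i * kraw n q i z)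
    (hB1a : 0 < c 0) (hB1b : ∀ i : ℕ, τ + 1 ≤ i → i ≤ n → c i ≤ 0)
    (hB2a : 0 < f 0) (hB2b : ∀ i : ℕ, 1 ≤ i → i ≤ n → 0 ≤ f i)
    (C : Finset (Fin n → Fin q)) (hC : C.Nonempty)
    (hdesign : ∀ i : ℕ, 1 ≤ i → i ≤ τ → dualDistDistrib C i = 0) :
    f 0 / c 0 ≤ (C.card : ℝ) :=
  LP_bound_for_designs_general n q τ hq f c hf hB1a hB1b hB2b C hC hdesign
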